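/- Let Σ̂ be an n×n positive semidefinite symmetric matrix, ε ≥ 0, and let B = {Σ ⪰ 0 : G(Σ, Σ̂) ≤ ε} be the Gelbrich ball of radius ε around Σ̂. Then for every Σ ∈ B, ‖Σ‖_F ≤ (2λ_max(Σ̂)^{1/2} + ε)·ε + ‖Σ̂‖_F. -/

import Mathlib

/-!
Put `A = Σ^{1/2}`, `B = Σ̂^{1/2}`, `M = (B Σ B)^{1/2}`. As `(AB)ᴴ(AB) = M²`, polar decomposition
gives an orthogonal `V` with `AB = VM`, and the trace in the Gelbrich distance becomes
`‖D‖_F²` for `D = A - VB`. Then `Σ - Σ̂ = A D + Dᴴ V B` and `A D = D D + V B D`, while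
`B² = Σ̂ ≤ λ_max(Σ̂)` bounds multiplication by `B` in Frobenius norm by `λ_max(Σ̂)^{1/2}`.
-/

open Matrix

/-- Frobenius norm. -/
noncomputable def frobNorm {n : ℕ} (A : Matrix (Fin n) (Fin n) ℝ) : ℝ :=
  Real.sqrt ((Aᵀ * A).trace)

open scoped ComplexOrder in
/-- The positive semidefinite square root of a positive semidefinite matrix
(the definition `Matrix.PosSemidef.sqrt` of the older Mathlib, since removed). -/
noncomputable def Matrix.PosSemidef.sqrt {m : Type*} {𝕜 : Type*} [Fintype m] [DecidableEq m]
    [RCLike 𝕜] {A : Matrix m m 𝕜} (hA : A.PosSemidef) : Matrix m m 𝕜 :=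
  hA.1.eigenvectorUnitary.1 * diagonal ((↑) ∘ (Real.sqrt ∘ hA.1.eigenvalues)) *
  (star hA.1.eigenvectorUnitary : Matrix m m 𝕜)

open scoped ComplexOrder

attribute [local instance] Matrix.frobeniusSeminormedAddCommGroup

theorem exists_linearIsometryEquiv_apply_eq_of_norm_eq {𝕜 U V : Type*} [RCLike 𝕜]
    [AddCommGroup U] [Module 𝕜 U]
    [NormedAddCommGroup V] [InnerProductSpace 𝕜 V] [FiniteDimensional 𝕜 V]
    (K Z : U →ₗ[𝕜] V) (h : ∀ x, ‖Z x‖ = ‖K x‖) : ∃ g : V ≃ₗᵢ[𝕜] V, ∀ x, g (K x) = Z x := by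
  obtain ⟨s, hs⟩ := K.rangeRestrict.exists_rightInverse_of_surjective K.range_rangeRestrict
  have hKs (y : LinearMap.range K) : K (s y) = y := congr_arg Subtype.val (LinearMap.congr_fun hs y)
  let L : LinearMap.range K →ₗᵢ[𝕜] V :=
    { toLinearMap := Z ∘ₗ s
      norm_map' y := by simp only [LinearMap.comp_apply, h, hKs, Submodule.coe_norm] }
  refine ⟨L.extend.toLinearIsometryEquiv rfl, fun x => ?_⟩
  have hker : ‖Z (s ⟨K x, LinearMap.mem_range_self K x⟩ - x)‖ = 0 := by
    rw [h, map_sub, hKs, sub_self, norm_zero]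
  rw [norm_eq_zero, map_sub, sub_eq_zero] at hker
  exact (L.extend_apply ⟨K x, LinearMap.mem_range_self K x⟩).trans hker

namespace Matrix

variable {𝕜 : Type*} [RCLike 𝕜] {l m n : Type*} [Fintype l] [Fintype m] [Fintype n]

theorem PosSemidef.posSemidef_sqrt [DecidableEq m] {A : Matrix m m 𝕜} (hA : A.PosSemidef) :
    hA.sqrt.PosSemidef := by
  have hd : (0 : m → 𝕜) ≤ ((↑) ∘ (Real.sqrt ∘ hA.1.eigenvalues)) := fun i =>
    RCLike.ofReal_nonneg.mpr (Real.sqrt_nonneg _)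
  simpa only [PosSemidef.sqrt, ← star_eq_conjTranspose] using
    (PosSemidef.diagonal hd).mul_mul_conjTranspose_same (hA.1.eigenvectorUnitary : Matrix m m 𝕜)

theorem PosSemidef.sqrt_mul_self [DecidableEq m] {A : Matrix m m 𝕜} (hA : A.PosSemidef) :
    hA.sqrt * hA.sqrt = A := by
  have hU : (star hA.1.eigenvectorUnitary : Matrix m m 𝕜) * hA.1.eigenvectorUnitary = 1 :=
    Unitary.coe_star_mul_self _
  have hDD : diagonal (((↑) ∘ (Real.sqrt ∘ hA.1.eigenvalues)) : m → 𝕜) *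
      diagonal ((↑) ∘ (Real.sqrt ∘ hA.1.eigenvalues)) =
      diagonal (RCLike.ofReal ∘ hA.1.eigenvalues) := by
    rw [diagonal_mul_diagonal]
    congr 1; funext i
    simp only [Function.comp_apply, ← RCLike.ofReal_mul,
      Real.mul_self_sqrt (hA.eigenvalues_nonneg i)]
  unfold PosSemidef.sqrt
  conv_rhs => rw [hA.1.spectral_theorem, Unitary.conjStarAlgAut_apply]
  rw [← hDD]
  simp only [Matrix.mul_assoc]
  rw [← Matrix.mul_assoc (star _ : Matrix m m 𝕜) _ _, hU, Matrix.one_mul]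

theorem frobenius_norm_sq_eq_re_trace (X : Matrix m n 𝕜) :
    ‖X‖ ^ 2 = RCLike.re (Xᴴ * X).trace := by
  simp only [frobenius_norm_def, trace, diag, mul_apply, conjTranspose_apply, map_sum,
    RCLike.star_def, RCLike.conj_mul, ← RCLike.ofReal_pow, RCLike.ofReal_re]
  rw [← Real.rpow_natCast, ← Real.rpow_mul (by positivity), Finset.sum_comm]
  norm_num

variable [DecidableEq n]

open MatrixOrder in
theorem IsHermitian.posSemidef_iSup_eigenvalues_smul_one_sub {A : Matrix n n 𝕜}
    (hA : A.IsHermitian) : ((⨆ i, hA.eigenvalues i) • 1 - A).PosSemidef := by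
  rw [← le_iff, ← Algebra.algebraMap_eq_smul_one, le_algebraMap_iff_spectrum_le hA,
    hA.spectrum_real_eq_range_eigenvalues]
  rintro _ ⟨i, rfl⟩
  exact le_ciSup (Set.finite_range _).bddAbove i

theorem exists_mem_unitaryGroup_eq_mul_of_conjTranspose_mul_self_eq {M Y : Matrix n n 𝕜}
    (h : Yᴴ * Y = Mᴴ * M) : ∃ U ∈ unitaryGroup n 𝕜, Y = U * M := by
  let T := toEuclideanCLM (𝕜 := 𝕜) (n := n)
  have hinner (A : Matrix n n 𝕜) (x : EuclideanSpace 𝕜 n) :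
      inner 𝕜 (T A x) (T A x) = inner 𝕜 x (T (Aᴴ * A) x) := by
    rw [map_mul, ← star_eq_conjTranspose, map_star, ContinuousLinearMap.star_eq_adjoint,
      mul_apply_eq_comp, ContinuousLinearMap.adjoint_inner_right]
  have hnorm (x : EuclideanSpace 𝕜 n) : ‖T Y x‖ = ‖T M x‖ := by
    rw [← sq_eq_sq₀ (norm_nonneg _) (norm_nonneg _), @norm_sq_eq_re_inner 𝕜,
      @norm_sq_eq_re_inner 𝕜, hinner, hinner, h]
  obtain ⟨g, hg⟩ := exists_linearIsometryEquiv_apply_eq_of_norm_eq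
    (T M).toLinearMap (T Y).toLinearMap hnorm
  refine ⟨T.symm (Unitary.linearIsometryEquiv.symm g),
    Unitary.map_mem T.symm (SetLike.coe_mem _), ?_⟩
  rw [← T.symm_apply_apply Y, ← T.symm_apply_apply M, ← map_mul]
  congr 1
  ext1 x
  exact (hg x).symm

theorem frobenius_norm_unitary_mul {V : Matrix n n 𝕜} (hV : V ∈ unitaryGroup n 𝕜)
    (X : Matrix n l 𝕜) : ‖V * X‖ = ‖X‖ := by
  rw [← sq_eq_sq₀ (norm_nonneg _) (norm_nonneg _), frobenius_norm_sq_eq_re_trace,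
    frobenius_norm_sq_eq_re_trace, conjTranspose_mul, Matrix.mul_assoc, ← Matrix.mul_assoc Vᴴ,
    ← star_eq_conjTranspose, Unitary.star_mul_self_of_mem hV, Matrix.one_mul]

theorem frobenius_norm_mul_le_of_posSemidef {c : ℝ} {P : Matrix m n 𝕜}
    (hP : (c • 1 - Pᴴ * P).PosSemidef) (X : Matrix n l 𝕜) :
    ‖P * X‖ ≤ √c * ‖X‖ := by
  have key : ‖P * X‖ ^ 2 ≤ c * ‖X‖ ^ 2 := by
    have h := RCLike.nonneg_iff.mp (hP.conjTranspose_mul_mul_same X).trace_nonneg |>.1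
    rw [Matrix.mul_sub, Matrix.sub_mul, trace_sub, Matrix.mul_smul, Matrix.smul_mul, Matrix.mul_one,
      trace_smul, map_sub, RCLike.smul_re, sub_nonneg] at h
    rwa [frobenius_norm_sq_eq_re_trace, frobenius_norm_sq_eq_re_trace, conjTranspose_mul,
      Matrix.mul_assoc, ← Matrix.mul_assoc Pᴴ, ← Matrix.mul_assoc]
  calc ‖P * X‖ = √(‖P * X‖ ^ 2) := (Real.sqrt_sq (norm_nonneg _)).symm
    _ ≤ √(c * ‖X‖ ^ 2) := Real.sqrt_le_sqrt key
    _ = √c * ‖X‖ := by rw [Real.sqrt_mul' _ (by positivity), Real.sqrt_sq (norm_nonneg _)]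

theorem frobenius_norm_sub_unitary_mul_sq {A B M V : Matrix n n 𝕜} (hA : A.IsHermitian)
    (hB : B.IsHermitian) (hV : V ∈ unitaryGroup n 𝕜) (hAB : A * B = V * M) :
    ‖A - V * B‖ ^ 2 = RCLike.re (A * A + B * B - (2 : ℝ) • M).trace := by
  have hVV : Vᴴ * V = 1 := Unitary.star_mul_self_of_mem hV
  have hBA : B * A = Mᴴ * Vᴴ := by
    rw [← hA.eq, ← hB.eq, ← conjTranspose_mul, hAB, conjTranspose_mul]
  have hAVB : (A * (V * B)).trace = star M.trace := by
    rw [← Matrix.mul_assoc, trace_mul_comm, ← Matrix.mul_assoc, hBA, Matrix.mul_assoc, hVV,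
      Matrix.mul_one, trace_conjTranspose]
  have hBVA : (B * Vᴴ * A).trace = M.trace := by
    rw [trace_mul_comm, ← Matrix.mul_assoc, hAB, Matrix.mul_assoc, trace_mul_comm,
      Matrix.mul_assoc, hVV, Matrix.mul_one]
  have hexpand : (A - V * B)ᴴ * (A - V * B) =
      A * A - A * (V * B) - B * Vᴴ * A + B * (Vᴴ * V) * B := by
    rw [conjTranspose_sub, conjTranspose_mul, hA.eq, hB.eq]
    noncomm_ring
  rw [frobenius_norm_sq_eq_re_trace, hexpand, hVV, Matrix.mul_one]
  simp only [trace_add, trace_sub, trace_smul, hAVB, hBVA, map_add, map_sub, RCLike.smul_re,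
    RCLike.star_def, RCLike.conj_re]
  ring

theorem frobenius_norm_mul_self_sub_mul_self_le {c : ℝ} {A B V : Matrix n n 𝕜}
    (hA : A.IsHermitian) (hB : B.IsHermitian) (hV : V ∈ unitaryGroup n 𝕜)
    (hBc : (c • 1 - B * B).PosSemidef) :
    ‖A * A - B * B‖ ≤ (2 * √c + ‖A - V * B‖) * ‖A - V * B‖ := by
  set D := A - V * B
  have hBc' : (c • 1 - Bᴴ * B).PosSemidef := by rwa [hB.eq]
  have hV' : Vᴴ ∈ unitaryGroup n 𝕜 := Unitary.star_mem hV
  have hsplit : A * A - B * B = A * D + (B * (Vᴴ * D))ᴴ := by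
    have hVV : Vᴴ * V = 1 := Unitary.star_mul_self_of_mem hV
    simp only [D, conjTranspose_mul, conjTranspose_conjTranspose, conjTranspose_sub, hA.eq, hB.eq]
    calc A * A - B * B = A * A - B * (Vᴴ * V) * B := by rw [hVV, Matrix.mul_one]
      _ = _ := by noncomm_ring
  have hBD : ‖B * (Vᴴ * D)‖ ≤ √c * ‖D‖ := by
    simpa only [frobenius_norm_unitary_mul hV'] using
      frobenius_norm_mul_le_of_posSemidef hBc' (Vᴴ * D)
  have hAD : ‖A * D‖ ≤ ‖D‖ * ‖D‖ + √c * ‖D‖ := by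
    calc ‖A * D‖ = ‖D * D + V * (B * D)‖ := by
          rw [← Matrix.mul_assoc, ← Matrix.add_mul, sub_add_cancel]
      _ ≤ ‖D * D‖ + ‖B * D‖ := by
          rw [← frobenius_norm_unitary_mul hV (B * D)]; exact norm_add_le _ _
      _ ≤ ‖D‖ * ‖D‖ + √c * ‖D‖ :=
          add_le_add (frobenius_norm_mul _ _) (frobenius_norm_mul_le_of_posSemidef hBc' D)
  calc ‖A * A - B * B‖ ≤ ‖A * D‖ + ‖(B * (Vᴴ * D))ᴴ‖ := hsplit ▸ norm_add_le _ _
    _ = ‖A * D‖ + ‖B * (Vᴴ * D)‖ := by rw [frobenius_norm_conjTranspose]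
    _ ≤ (2 * √c + ‖D‖) * ‖D‖ := by linarith

end Matrix

theorem frobNorm_eq_norm {n : ℕ} (X : Matrix (Fin n) (Fin n) ℝ) : frobNorm X = ‖X‖ := by
  rw [frobNorm, ← conjTranspose_eq_transpose_of_trivial, ← RCLike.re_to_real (x := trace _),
    ← frobenius_norm_sq_eq_re_trace, Real.sqrt_sq (norm_nonneg _)]

theorem stmt_10_general {n : ℕ} (ε : ℝ) (S Shat : Matrix (Fin n) (Fin n) ℝ)
    (hS : S.PosSemidef) (hShat : Shat.PosSemidef)
    (hM : (hShat.sqrt * S * hShat.sqrt).PosSemidef)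
    (hG : Real.sqrt ((S + Shat - (2 : ℝ) • hM.sqrt).trace) ≤ ε) :
    frobNorm S
      ≤ (2 * Real.sqrt (⨆ i, hShat.isHermitian.eigenvalues i) + ε) * ε + frobNorm Shat := by
  set lam := ⨆ i, hShat.isHermitian.eigenvalues i
  set A := hS.sqrt
  set B := hShat.sqrt
  have hA : A.IsHermitian := hS.posSemidef_sqrt.isHermitian
  have hB : B.IsHermitian := hShat.posSemidef_sqrt.isHermitian
  have hMh : hM.sqrt.IsHermitian := hM.posSemidef_sqrt.isHermitian
  have hMM : (A * B)ᴴ * (A * B) = hM.sqrtᴴ * hM.sqrt := by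
    rw [hMh.eq, hM.sqrt_mul_self, conjTranspose_mul, hA.eq, hB.eq, ← hS.sqrt_mul_self]
    noncomm_ring
  obtain ⟨V, hV, hAB⟩ := exists_mem_unitaryGroup_eq_mul_of_conjTranspose_mul_self_eq hMM
  have hD : ‖A - V * B‖ ≤ ε := by
    rw [← Real.sqrt_sq (norm_nonneg _), frobenius_norm_sub_unitary_mul_sq hA hB hV hAB,
      hS.sqrt_mul_self, hShat.sqrt_mul_self]
    exact hG
  have hBB : (lam • 1 - B * B).PosSemidef := by
    rw [hShat.sqrt_mul_self]
    exact hShat.isHermitian.posSemidef_iSup_eigenvalues_smul_one_sub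
  rw [frobNorm_eq_norm, frobNorm_eq_norm]
  calc ‖S‖ ≤ ‖S - Shat‖ + ‖Shat‖ := norm_le_norm_sub_add S Shat
    _ = ‖A * A - B * B‖ + ‖Shat‖ := by rw [hS.sqrt_mul_self, hShat.sqrt_mul_self]
    _ ≤ (2 * √lam + ‖A - V * B‖) * ‖A - V * B‖ + ‖Shat‖ := by
      gcongr; exact frobenius_norm_mul_self_sub_mul_self_le hA hB hV hBB
    _ ≤ (2 * √lam + ε) * ε + ‖Shat‖ := by
      have hε : 0 ≤ ε := (norm_nonneg _).trans hD
      gcongr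

theorem stmt_10 {n : ℕ} (ε : ℝ) (hε : 0 ≤ ε) (S Shat : Matrix (Fin n) (Fin n) ℝ)
    (hS : S.PosSemidef) (hShat : Shat.PosSemidef)
    (hM : (hShat.sqrt * S * hShat.sqrt).PosSemidef)
    (hG : Real.sqrt ((S + Shat - (2 : ℝ) • hM.sqrt).trace) ≤ ε) :
    frobNorm S
      ≤ (2 * Real.sqrt (⨆ i, hShat.isHermitian.eigenvalues i) + ε) * ε + frobNorm Shat :=
  stmt_10_general ε S Shat hS hShat hM hG
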